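/- arXiv:2109.09578 — 3 statements merged into one kernel-verified Lean document; each statement's English description precedes it below -/
import Mathlib

section
/- Let L be an N×N real matrix with nonnegative entries that is line-sum-symmetric, i.e. L·1 = Lᵀ·1 where 1 is the all-ones vector. Then for every vector u with all entries positive, ∑_{i=1}^N (Lu)_i / u_i ≥ ∑_{i,j=1}^N L_{i,j}. -/
open Matrix

/-- For a nonnegative line-sum-symmetric matrix `L` and a positive
vector `u`, `∑ i (Lu)_i / u_i ≥ ∑ i j L i j`. -/
theorem line_sum_symmetric_quotient_bound (N : ℕ) (L : Matrix (Fin N) (Fin N) ℝ)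
    (hL : ∀ i j, 0 ≤ L i j)
    (hlss : ∀ i, ∑ j, L i j = ∑ j, L j i)
    (u : Fin N → ℝ) (hu : ∀ i, 0 < u i) :
    ∑ i, (L.mulVec u) i / u i ≥ ∑ i, ∑ j, L i j := by
  have h1 : ∀ i j, L i j + L i j * (Real.log (u j) - Real.log (u i))
      ≤ L i j * (u j / u i) := by
    intro i j
    have hx : Real.log (u j / u i) ≤ u j / u i - 1 :=
      Real.log_le_sub_one_of_pos (div_pos (hu j) (hu i))
    rw [Real.log_div (hu j).ne' (hu i).ne'] at hx
    nlinarith [hL i j, mul_le_mul_of_nonneg_left hx (hL i j)]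
  have h0 : ∑ i, ∑ j, L i j * (Real.log (u j) - Real.log (u i)) = 0 := by
    have e1 : ∑ i, ∑ j, L i j * Real.log (u j)
        = ∑ i, ∑ j, L i j * Real.log (u i) := by
      rw [Finset.sum_comm]
      refine Finset.sum_congr rfl fun i _ => ?_
      rw [← Finset.sum_mul, ← Finset.sum_mul, ← hlss i]
    simp only [mul_sub, Finset.sum_sub_distrib]
    rw [e1, sub_self]
  calc ∑ i, ∑ j, L i j
      = ∑ i, ∑ j, (L i j + L i j * (Real.log (u j) - Real.log (u i))) := by
        simp [Finset.sum_add_distrib, h0]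
    _ ≤ ∑ i, ∑ j, L i j * (u j / u i) :=
        Finset.sum_le_sum fun i _ => Finset.sum_le_sum fun j _ => h1 i j
    _ = ∑ i, (L.mulVec u) i / u i := by
        simp [Matrix.mulVec, dotProduct, Finset.sum_div, mul_div_assoc]
end

section
/- Let f : (0,∞) × [0,∞) → ℝ be positively homogeneous of degree 1 (f(cr, cs) = c·f(r,s) for all c > 0) and convex in its second variable s for each fixed r. Then: (1) f is convex in its first variable r for each fixed s; and (2) for all r ∈ (0,∞) and s ∈ [0,∞), and all z > 0, f(r+z, s) ≤ f(r,s) + z·f(1,0). -/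
/-- Altenberg's dual convexity lemma, parts 1 and 2: if
`f : (0,∞) × [0,∞) → ℝ` is positively homogeneous of degree 1 and convex in its
second variable, then it is convex in its first variable, and
`f(r+z,s) ≤ f(r,s) + z f(1,0)` for all `r > 0`, `s ≥ 0`, `z > 0`. -/
theorem dual_convexity (f : ℝ → ℝ → ℝ)
    (hhom : ∀ c > (0:ℝ), ∀ r > (0:ℝ), ∀ s ≥ (0:ℝ), f (c*r) (c*s) = c * f r s)
    (hconv : ∀ r > (0:ℝ), ConvexOn ℝ (Set.Ici (0:ℝ)) (f r)) :
    (∀ s ≥ (0:ℝ), ConvexOn ℝ (Set.Ioi (0:ℝ)) fun r => f r s) ∧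
    ∀ r > (0:ℝ), ∀ s ≥ (0:ℝ), ∀ z > (0:ℝ), f (r+z) s ≤ f r s + z * f 1 0 := by
  have hg := hconv 1 one_pos
  have key : ∀ r > (0:ℝ), ∀ s ≥ (0:ℝ), f r s = r * f 1 (s/r) := by
    intro r hr s hs
    have h := hhom r hr 1 one_pos (s/r) (div_nonneg hs hr.le)
    rw [mul_one, mul_div_cancel₀ _ hr.ne'] at h
    exact h
  constructor
  · intro s hs
    refine ⟨convex_Ioi 0, ?_⟩
    intro x hx y hy a b ha hb hab
    simp only [smul_eq_mul]
    have hx : (0:ℝ) < x := hx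
    have hy : (0:ℝ) < y := hy
    rcases ha.eq_or_lt with rfl|ha'
    · rw [zero_add] at hab; subst hab; simp
    rcases hb.eq_or_lt with rfl|hb'
    · rw [add_zero] at hab; subst hab; simp
    obtain rfl : b = 1 - a := by linarith
    have hr : 0 < a*x + (1-a)*y := by positivity
    have w1 : (0:ℝ) ≤ a*x/(a*x+(1-a)*y) := by positivity
    have w2 : (0:ℝ) ≤ (1-a)*y/(a*x+(1-a)*y) := by positivity
    have wsum : a*x/(a*x+(1-a)*y) + (1-a)*y/(a*x+(1-a)*y) = 1 := by field_simp
    have m1 : s/x ∈ Set.Ici (0:ℝ) := Set.mem_Ici.mpr (div_nonneg hs hx.le)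
    have m2 : s/y ∈ Set.Ici (0:ℝ) := Set.mem_Ici.mpr (div_nonneg hs hy.le)
    have hgle := hg.2 m1 m2 w1 w2 wsum
    simp only [smul_eq_mul] at hgle
    have hcomb : a*x/(a*x+(1-a)*y) * (s/x) + (1-a)*y/(a*x+(1-a)*y) * (s/y)
        = s/(a*x+(1-a)*y) := by
      field_simp
      ring
    rw [hcomb] at hgle
    rw [key x hx s hs, key y hy s hs, key (a*x+(1-a)*y) hr s hs]
    calc (a*x+(1-a)*y) * f 1 (s/(a*x+(1-a)*y))
        ≤ (a*x+(1-a)*y) * (a*x/(a*x+(1-a)*y) * f 1 (s/x) + (1-a)*y/(a*x+(1-a)*y) * f 1 (s/y)) :=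
          mul_le_mul_of_nonneg_left hgle hr.le
      _ = a * (x * f 1 (s/x)) + (1-a) * (y * f 1 (s/y)) := by field_simp
  · intro r hr s hs z hz
    have hrz : (0:ℝ) < r + z := by linarith
    have w1 : (0:ℝ) ≤ r/(r+z) := by positivity
    have w2 : (0:ℝ) ≤ z/(r+z) := by positivity
    have wsum : r/(r+z) + z/(r+z) = 1 := by field_simp
    have m1 : s/r ∈ Set.Ici (0:ℝ) := Set.mem_Ici.mpr (div_nonneg hs hr.le)
    have m0 : (0:ℝ) ∈ Set.Ici (0:ℝ) := Set.mem_Ici.mpr (le_refl 0)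
    have hgle := hg.2 m1 m0 w1 w2 wsum
    simp only [smul_eq_mul, mul_zero, add_zero] at hgle
    have hcomb : r/(r+z) * (s/r) = s/(r+z) := by field_simp
    rw [hcomb] at hgle
    have h0 : f 1 0 = f 1 (0/1) := by norm_num
    rw [key (r+z) hrz s hs, key r hr s hs]
    calc (r+z) * f 1 (s/(r+z))
        ≤ (r+z) * (r/(r+z) * f 1 (s/r) + z/(r+z) * f 1 0) :=
          mul_le_mul_of_nonneg_left hgle hrz.le
      _ = r * f 1 (s/r) + z * f 1 0 := by field_simp
end

section
/- (Karlin's theorem) Let S be an N×N irreducible column-stochastic matrix with nonnegative entries (Sᵀ·1 = 1) and let D be a diagonal matrix with positive diagonal entries. Then the map τ ∈ [0,1] ↦ λ_PF(((1−τ)I + τS)D) is nonincreasing, where λ_PF denotes the Perron–Frobenius eigenvalue (spectral radius). -/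
open Matrix

/-- `μ` is a (complex) eigenvalue of the real matrix `A`. -/
def IsEigenvalue {N : ℕ} (A : Matrix (Fin N) (Fin N) ℝ) (μ : ℂ) : Prop :=
  ∃ v : Fin N → ℂ, v ≠ 0 ∧ (A.map Complex.ofReal).mulVec v = μ • v

/-- `A` has no nontrivial invariant coordinate subspace spanned by standard basis vectors. -/
def MatIrreducible {N : ℕ} (A : Matrix (Fin N) (Fin N) ℝ) : Prop :=
  ∀ S : Finset (Fin N), S.Nonempty → S ≠ Finset.univ → ∃ i ∈ S, ∃ j ∉ S, A j i ≠ 0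

/-- The spectral radius of a real matrix. -/
noncomputable def specRad {N : ℕ} (A : Matrix (Fin N) (Fin N) ℝ) : ℝ :=
  sSup {r : ℝ | ∃ μ : ℂ, IsEigenvalue A μ ∧ r = ‖μ‖}

/-!
Put `M = (1 - τ₂) I + τ₂ S`, `B = M D` and `σ = τ₁ / τ₂`, so that the `τ₁`-matrix is
`(1 - σ) D + σ B`. If `u` and `w` are right and left Perron vectors of `B` for the root `r`,
Jensen's inequality for `log`, applied row by row and summed against `w`, gives the
Donsker–Varadhan bound `(∑ wᵢ uᵢ) log r ≤ ∑ wᵢ uᵢ log ((B x)ᵢ / xᵢ)` for every positive `x`.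
At `x = D⁻¹ v`, where `M v = v` because the columns of `M` sum to one, the ratios are the `dᵢ`;
at the Perron vector of `(1 - σ) D + σ B` they are numbers `qᵢ` with `(1 - σ) dᵢ + σ qᵢ` equal
to its root. Concavity of `log` combines the two bounds into `r ≤` that root. When `τ₁ = 0` the
root is `max dᵢ`, which bounds `r` because the column sums of `B` are the `dᵢ`.

Positive Perron vectors are obtained by maximising the Collatz–Wielandt function over the image
of the simplex under the positive matrix `(1 + A) ^ (N - 1)`.
-/

open Finset Real

variable {N : ℕ}

section Spectrum

variable {A : Matrix (Fin N) (Fin N) ℝ}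

lemma isEigenvalue_ofReal {u : Fin N → ℝ} {r : ℝ} (hu : u ≠ 0) (h : A *ᵥ u = r • u) :
    IsEigenvalue A r := by
  refine ⟨fun i => (u i : ℂ), fun hv => hu (funext fun i => by simpa using congrFun hv i), ?_⟩
  funext i
  simpa [mulVec, dotProduct] using congrArg ((↑) : ℝ → ℂ) (congrFun h i)

lemma isEigenvalue_iff_det_eq_zero {μ : ℂ} :
    IsEigenvalue A μ ↔ (μ • (1 : Matrix (Fin N) (Fin N) ℂ) - A.map Complex.ofReal).det = 0 := by
  rw [← exists_mulVec_eq_zero_iff]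
  refine exists_congr fun v => and_congr_right fun _ => ?_
  rw [sub_mulVec, smul_mulVec, one_mulVec, sub_eq_zero, eq_comm]

lemma isEigenvalue_transpose_iff {μ : ℂ} : IsEigenvalue Aᵀ μ ↔ IsEigenvalue A μ := by
  rw [isEigenvalue_iff_det_eq_zero, isEigenvalue_iff_det_eq_zero, transpose_map,
    ← det_transpose, transpose_sub, transpose_smul, transpose_one, transpose_transpose]

lemma specRad_transpose : specRad Aᵀ = specRad A := by
  simp only [specRad, isEigenvalue_transpose_iff]

lemma mulVec_nonneg (hA : ∀ i j, 0 ≤ A i j) {x : Fin N → ℝ} (hx : ∀ i, 0 ≤ x i) (i : Fin N) :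
    0 ≤ (A *ᵥ x) i :=
  Finset.sum_nonneg (s := univ) fun j _ => mul_nonneg (hA i j) (hx j)

lemma mulVec_pos {P : Matrix (Fin N) (Fin N) ℝ} (hP : ∀ i j, 0 < P i j) {y : Fin N → ℝ}
    (hy : ∀ i, 0 ≤ y i) {j : Fin N} (hj : 0 < y j) (i : Fin N) : 0 < (P *ᵥ y) i :=
  sum_pos' (fun k _ => mul_nonneg (hP i k).le (hy k)) ⟨j, mem_univ j, mul_pos (hP i j) hj⟩

lemma norm_le_of_mulVec_le (hA : ∀ i j, 0 ≤ A i j) {x : Fin N → ℝ} (hx : ∀ i, 0 < x i)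
    {c : ℝ} (hAx : ∀ i, (A *ᵥ x) i ≤ c * x i) {μ : ℂ} (hμ : IsEigenvalue A μ) : ‖μ‖ ≤ c := by
  obtain ⟨v, hv, hev⟩ := hμ
  obtain ⟨j₀, hj₀⟩ := Function.ne_iff.mp hv
  have : Nonempty (Fin N) := ⟨j₀⟩
  obtain ⟨i₀, -, hi₀⟩ := exists_max_image univ (fun i => ‖v i‖ / x i) univ_nonempty
  set t := ‖v i₀‖ / x i₀
  have hv_le : ∀ j, ‖v j‖ ≤ t * x j := fun j => (div_le_iff₀ (hx j)).mp (hi₀ j (mem_univ j))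
  have ht : 0 < t := (div_pos (norm_pos_iff.mpr hj₀) (hx j₀)).trans_le (hi₀ j₀ (mem_univ _))
  have hvi₀ : ‖v i₀‖ = t * x i₀ := (div_mul_cancel₀ _ (hx i₀).ne').symm
  refine le_of_mul_le_mul_right ?_ (mul_pos ht (hx i₀))
  calc ‖μ‖ * (t * x i₀) = ‖∑ j, (A i₀ j : ℂ) * v j‖ := by
        rw [← hvi₀, ← norm_mul, ← smul_eq_mul, ← Pi.smul_apply, ← hev]; rfl
    _ ≤ ∑ j, A i₀ j * ‖v j‖ := by
        refine (norm_sum_le _ _).trans_eq (sum_congr rfl fun j _ => ?_)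
        rw [norm_mul, Complex.norm_real, Real.norm_of_nonneg (hA i₀ j)]
    _ ≤ ∑ j, A i₀ j * (t * x j) := by gcongr with j; exacts [hA i₀ j, hv_le j]
    _ = t * (A *ᵥ x) i₀ := by
        simp only [mulVec, dotProduct, mul_sum]
        exact sum_congr rfl fun j _ => by ring
    _ ≤ c * (t * x i₀) := by nlinarith [hAx i₀]

lemma specRad_eq_of_isEigenvalue {r : ℝ} (hr : 0 ≤ r) (hmem : IsEigenvalue A r)
    (hle : ∀ μ, IsEigenvalue A μ → ‖μ‖ ≤ r) : specRad A = r :=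
  IsGreatest.csSup_eq
    ⟨⟨r, hmem, by simp [abs_of_nonneg hr]⟩, by rintro _ ⟨μ, hμ, rfl⟩; exact hle μ hμ⟩

lemma specRad_le {c : ℝ} (hc : 0 ≤ c) (hle : ∀ μ, IsEigenvalue A μ → ‖μ‖ ≤ c) :
    specRad A ≤ c :=
  Real.sSup_le (by rintro _ ⟨μ, hμ, rfl⟩; exact hle μ hμ) hc

lemma specRad_eq_of_pos_eigenvector [NeZero N] (hA : ∀ i j, 0 ≤ A i j) {u : Fin N → ℝ}
    (hu : ∀ i, 0 < u i) {r : ℝ} (h : A *ᵥ u = r • u) : specRad A = r := by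
  have hr : 0 ≤ r := nonneg_of_mul_nonneg_left
    (by simpa [h] using mulVec_nonneg hA (fun i => (hu i).le) 0) (hu 0)
  refine specRad_eq_of_isEigenvalue hr (isEigenvalue_ofReal (fun h0 => (hu 0).ne' ?_) h)
    fun μ => norm_le_of_mulVec_le hA hu (fun i => by simp [h])
  simp [h0]

lemma mul_sum_eq_sum_colsum_mul {u : Fin N → ℝ} {r : ℝ} (h : A *ᵥ u = r • u) :
    r * ∑ i, u i = ∑ j, (∑ i, A i j) * u j := by
  have := dotProduct_mulVec (fun _ => (1 : ℝ)) A u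
  simp only [h, dotProduct, vecMul, Pi.smul_apply, smul_eq_mul, one_mul] at this
  rw [mul_sum, this]

end Spectrum

section Irreducible

variable {A B : Matrix (Fin N) (Fin N) ℝ}

lemma MatIrreducible.transpose (h : MatIrreducible A) : MatIrreducible Aᵀ := by
  classical
  intro F hF hFu
  obtain ⟨i, hi, j, hj, hij⟩ :=
    h Fᶜ (by simpa [nonempty_iff_ne_empty] using hFu) ((compl_ne_univ_iff_nonempty F).mpr hF)
  exact ⟨j, by simpa using hj, i, by simpa using hi, hij⟩

lemma MatIrreducible.of_ne_zero (h : MatIrreducible A)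
    (hAB : ∀ i j, i ≠ j → A i j ≠ 0 → B i j ≠ 0) : MatIrreducible B := by
  intro F hF hFu
  obtain ⟨i, hi, j, hj, hij⟩ := h F hF hFu
  exact ⟨i, hi, j, hj, hAB j i (fun h => hj (h ▸ hi)) hij⟩

lemma one_add_apply_nonneg (hA : ∀ i j, 0 ≤ A i j) (i j : Fin N) : 0 ≤ (1 + A) i j := by
  by_cases h : i = j
  · subst h; simp only [Matrix.add_apply, one_apply_eq]; linarith [hA i i]
  · simpa [one_apply_ne h] using hA i j

lemma one_add_mul_pow_le (hA : ∀ i j, 0 ≤ A i j) (k : ℕ) (i j m : Fin N) :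
    (1 + A) j m * ((1 + A) ^ k) m i ≤ ((1 + A) ^ (k + 1)) j i := by
  rw [pow_succ', mul_apply]
  exact single_le_sum (f := fun m => (1 + A) j m * ((1 + A) ^ k) m i)
    (fun m _ => mul_nonneg (one_add_apply_nonneg hA j m)
      (pow_apply_nonneg (one_add_apply_nonneg hA) k m i)) (mem_univ m)

lemma monotone_one_add_pow_apply (hA : ∀ i j, 0 ≤ A i j) (i j : Fin N) :
    Monotone fun k => ((1 + A) ^ k : Matrix (Fin N) (Fin N) ℝ) j i := by
  refine monotone_nat_of_le_succ fun k => le_trans ?_ (one_add_mul_pow_le hA k i j j)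
  refine le_mul_of_one_le_left (pow_apply_nonneg (one_add_apply_nonneg hA) k j i) ?_
  simpa using hA j j

lemma one_add_pow_apply_pos (hA : ∀ i j, 0 ≤ A i j) (hirr : MatIrreducible A) (i j : Fin N) :
    0 < ((1 + A) ^ (N - 1)) j i := by
  classical
  let F : ℕ → Finset (Fin N) := fun k => {j | 0 < ((1 + A) ^ k) j i}
  have hmono : ∀ k, F k ⊆ F (k + 1) := fun k j hj => by
    simp only [F, mem_filter_univ] at hj ⊢
    exact hj.trans_le (monotone_one_add_pow_apply hA i j k.le_succ)
  have hi : ∀ k, i ∈ F k := fun k => by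
    have := monotone_one_add_pow_apply hA i i (Nat.zero_le k)
    simp only [pow_zero, one_apply_eq] at this
    simpa [F] using one_pos.trans_le this
  have hgrow : ∀ k, F k ≠ univ → #(F k) < #(F (k + 1)) := by
    intro k hk
    obtain ⟨a, ha, b, hb, hba⟩ := hirr (F k) ⟨i, hi k⟩ hk
    refine card_lt_card ((ssubset_iff_of_subset (hmono k)).mpr ⟨b, ?_, hb⟩)
    have hab : 0 < (1 + A) b a := by
      rw [Matrix.add_apply, one_apply_ne fun h : b = a => hb (h ▸ ha), zero_add]
      exact (hA b a).lt_of_ne' hba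
    simp only [F, mem_filter_univ] at ha ⊢
    exact (mul_pos hab ha).trans_le (one_add_mul_pow_le hA k i b a)
  have hcard : ∀ k, min (k + 1) N ≤ #(F k) := by
    intro k
    induction k with
    | zero => have := card_pos.mpr ⟨i, hi 0⟩; omega
    | succ k ih =>
      by_cases hk : F k = univ
      · have : F (k + 1) = univ := eq_univ_of_forall fun j => hmono k (hk ▸ mem_univ j)
        simp only [this, card_univ, Fintype.card_fin]; omega
      · have := hgrow k hk
        have := card_le_univ (F k)
        simp only [Fintype.card_fin] at this; omega
  have hfull : F (N - 1) = univ := by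
    refine eq_univ_of_card _ (le_antisymm (card_le_univ _) ?_)
    have := hcard (N - 1)
    have := i.pos
    simp only [Fintype.card_fin]; omega
  have hj : j ∈ F (N - 1) := hfull ▸ mem_univ j
  simpa [F] using hj

end Irreducible

section Perron

variable [NeZero N] {A P : Matrix (Fin N) (Fin N) ℝ}

noncomputable def collatzWielandt (A : Matrix (Fin N) (Fin N) ℝ) (x : Fin N → ℝ) : ℝ :=
  univ.inf' univ_nonempty fun i => (A *ᵥ x) i / x i

lemma collatzWielandt_mul_le {x : Fin N → ℝ} {i : Fin N} (hx : 0 < x i) :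
    collatzWielandt A x * x i ≤ (A *ᵥ x) i :=
  (le_div_iff₀ hx).mp (inf'_le _ (mem_univ i))

lemma lt_collatzWielandt {x : Fin N → ℝ} (hx : ∀ i, 0 < x i) {r : ℝ}
    (h : ∀ i, r * x i < (A *ᵥ x) i) : r < collatzWielandt A x :=
  (lt_inf'_iff _).mpr fun i _ => (lt_div_iff₀ (hx i)).mpr (h i)

lemma collatzWielandt_smul {x : Fin N → ℝ} {c : ℝ} (hc : c ≠ 0) :
    collatzWielandt A (c • x) = collatzWielandt A x := by
  simp only [collatzWielandt, mulVec_smul, Pi.smul_apply, smul_eq_mul, mul_div_mul_left _ _ hc]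

lemma continuousOn_collatzWielandt :
    ContinuousOn (collatzWielandt A) {x | ∀ i, x i ≠ 0} :=
  ContinuousOn.finset_inf'_apply _ fun i _ =>
    ((continuous_apply i).comp (continuous_const.matrix_mulVec continuous_id)).continuousOn.div
      (continuous_apply i).continuousOn fun _ hx => hx i

/-- A maximiser of the Collatz–Wielandt function over `P` applied to the simplex is an
eigenvector: otherwise applying the positive matrix `P` to it would increase the function. -/
theorem exists_pos_eigenvector_of_commute (hP : ∀ i j, 0 < P i j)
    (hcomm : Commute A P) : ∃ r : ℝ, ∃ u : Fin N → ℝ, (∀ i, 0 < u i) ∧ A *ᵥ u = r • u := by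
  have hPy : ∀ y ∈ stdSimplex ℝ (Fin N), ∀ i, 0 < (P *ᵥ y) i := by
    intro y hy
    obtain ⟨j, hj⟩ : ∃ j, 0 < y j := by
      by_contra! h
      linarith [sum_nonpos fun j (_ : j ∈ univ) => h j, hy.2]
    exact mulVec_pos hP hy.1 hj
  have hcont : ContinuousOn (fun y => collatzWielandt A (P *ᵥ y)) (stdSimplex ℝ (Fin N)) :=
    continuousOn_collatzWielandt.comp (continuous_const.matrix_mulVec continuous_id).continuousOn
      fun y hy i => (hPy y hy i).ne'
  obtain ⟨y, hy, hmax⟩ := (isCompact_stdSimplex ℝ (Fin N)).exists_isMaxOn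
    ⟨_, single_mem_stdSimplex ℝ 0⟩ hcont
  set u := P *ᵥ y
  set r := collatzWielandt A u
  have hu : ∀ i, 0 < u i := hPy y hy
  refine ⟨r, u, hu, ?_⟩
  by_contra hne
  have hslack : ∀ i, 0 ≤ (A *ᵥ u - r • u) i := fun i =>
    sub_nonneg.mpr (collatzWielandt_mul_le (hu i))
  obtain ⟨j, hj⟩ : ∃ j, 0 < (A *ᵥ u - r • u) j := by
    by_contra! h
    exact hne (sub_eq_zero.mp (funext fun i => le_antisymm (h i) (hslack i)))
  have hstrict : ∀ i, r * (P *ᵥ u) i < (A *ᵥ (P *ᵥ u)) i := fun i => by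
    have := mulVec_pos hP hslack hj i
    rwa [mulVec_sub, mulVec_mulVec, ← hcomm.eq, ← mulVec_mulVec, mulVec_smul, Pi.sub_apply,
      Pi.smul_apply, smul_eq_mul, sub_pos] at this
  have hs : 0 < ∑ i, u i := sum_pos (fun i _ => hu i) univ_nonempty
  have hnormalised : (∑ i, u i)⁻¹ • u ∈ stdSimplex ℝ (Fin N) :=
    ⟨fun i => smul_nonneg (inv_nonneg.mpr hs.le) (hu i).le, by simp [← mul_sum, hs.ne']⟩
  have hle : collatzWielandt A (P *ᵥ ((∑ i, u i)⁻¹ • u)) ≤ r := hmax hnormalised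
  rw [mulVec_smul, collatzWielandt_smul (inv_ne_zero hs.ne')] at hle
  exact hle.not_gt (lt_collatzWielandt (mulVec_pos hP (fun i => (hu i).le) (hu 0)) hstrict)

theorem exists_pos_eigenvector (hA : ∀ i j, 0 ≤ A i j) (hirr : MatIrreducible A) :
    ∃ r : ℝ, ∃ u : Fin N → ℝ, (∀ i, 0 < u i) ∧ A *ᵥ u = r • u :=
  exists_pos_eigenvector_of_commute (fun i j => one_add_pow_apply_pos hA hirr j i)
    (((Commute.one_right A).add_right (Commute.refl A)).pow_right _)

end Perron

section DonskerVaradhan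

variable {B : Matrix (Fin N) (Fin N) ℝ} {u w x : Fin N → ℝ} {r : ℝ}

lemma mulVec_pos_of_eigenvector (hB : ∀ i j, 0 ≤ B i j) (hu : ∀ i, 0 < u i) (hr : 0 < r)
    (hBu : B *ᵥ u = r • u) (hx : ∀ i, 0 < x i) (i : Fin N) : 0 < (B *ᵥ x) i := by
  have hrow : ∑ _j : Fin N, (0 : ℝ) < ∑ j, B i j * u j := by
    rw [sum_const_zero]
    exact (mul_pos hr (hu i)).trans_eq (congrFun hBu i).symm
  obtain ⟨j, -, hj⟩ := exists_lt_of_sum_lt hrow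
  exact sum_pos' (fun k _ => mul_nonneg (hB i k) (hx k).le)
    ⟨j, mem_univ j, mul_pos (pos_of_mul_pos_left hj (hu j).le) (hx j)⟩

lemma sum_mul_log_div_le_log_mulVec_div (hB : ∀ i j, 0 ≤ B i j) (hu : ∀ i, 0 < u i)
    (hr : 0 < r) (hBu : B *ᵥ u = r • u) (hx : ∀ i, 0 < x i) (i : Fin N) :
    ∑ j, B i j * u j / (r * u i) * log (x j / u j) ≤ log ((B *ᵥ x) i / (r * u i)) := by
  have hri : 0 < r * u i := mul_pos hr (hu i)
  have hweights : ∑ j, B i j * u j / (r * u i) = 1 := by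
    rw [← sum_div, div_eq_one_iff_eq hri.ne']
    exact congrFun hBu i
  have hmean : ∑ j, B i j * u j / (r * u i) * (x j / u j) = (B *ᵥ x) i / (r * u i) := by
    rw [mulVec, dotProduct, sum_div]
    exact sum_congr rfl fun j _ => by field_simp [(hu j).ne']
  have := strictConcaveOn_log_Ioi.concaveOn.le_map_sum (t := univ)
    (w := fun j => B i j * u j / (r * u i)) (p := fun j => x j / u j)
    (fun j _ => div_nonneg (mul_nonneg (hB i j) (hu j).le) hri.le) hweights
    (fun j _ => div_pos (hx j) (hu j))
  simpa only [smul_eq_mul, hmean] using this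

theorem sum_mul_log_le_sum_mul_log_mulVec_div (hB : ∀ i j, 0 ≤ B i j) (hu : ∀ i, 0 < u i)
    (hw : ∀ i, 0 ≤ w i) (hr : 0 < r) (hBu : B *ᵥ u = r • u) (hBw : w ᵥ* B = r • w)
    (hx : ∀ i, 0 < x i) :
    (∑ i, w i * u i) * log r ≤ ∑ i, w i * u i * log ((B *ᵥ x) i / x i) := by
  have hsum := sum_le_sum fun i (_ : i ∈ univ) => mul_le_mul_of_nonneg_left
    (sum_mul_log_div_le_log_mulVec_div hB hu hr hBu hx i) (mul_nonneg (hw i) (hu i).le)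
  have hleft : ∑ i, w i * u i * ∑ j, B i j * u j / (r * u i) * log (x j / u j)
      = ∑ j, w j * u j * log (x j / u j) :=
    calc _ = ∑ i, ∑ j, w i * B i j * (u j * log (x j / u j) / r) :=
          sum_congr rfl fun i _ => by
            rw [mul_sum]
            exact sum_congr rfl fun j _ => by field_simp [(hu i).ne', hr.ne']
      _ = ∑ j, (w ᵥ* B) j * (u j * log (x j / u j) / r) := by
          rw [sum_comm]
          simp only [vecMul, dotProduct, sum_mul]
      _ = _ := by
          rw [hBw]
          exact sum_congr rfl fun j _ => by
            simp only [Pi.smul_apply, smul_eq_mul]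
            field_simp
  have hright : ∀ i, log ((B *ᵥ x) i / (r * u i))
      = log ((B *ᵥ x) i / x i) - log r + log (x i / u i) := fun i => by
    have hBx := mulVec_pos_of_eigenvector hB hu hr hBu hx i
    rw [log_div hBx.ne' (mul_pos hr (hu i)).ne', log_div hBx.ne' (hx i).ne',
      log_div (hx i).ne' (hu i).ne', log_mul hr.ne' (hu i).ne']
    ring
  rw [hleft] at hsum
  simp only [hright, mul_add, mul_sub, sum_add_distrib, sum_sub_distrib, ← sum_mul] at hsum
  linarith

theorem eigenvalue_le_eigenvalue_convexComb_diagonal [NeZero N] (hB : ∀ i j, 0 ≤ B i j)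
    (hu : ∀ i, 0 < u i) (hw : ∀ i, 0 < w i) (hr : 0 < r) (hBu : B *ᵥ u = r • u)
    (hBw : w ᵥ* B = r • w) {d : Fin N → ℝ} (hd : ∀ i, 0 < d i) (hx : ∀ i, 0 < x i)
    (hBx : B *ᵥ x = diagonal d *ᵥ x) {σ : ℝ} (hσ₀ : 0 ≤ σ) (hσ₁ : σ ≤ 1) {y : Fin N → ℝ}
    (hy : ∀ i, 0 < y i) {r₁ : ℝ} (hy₁ : ((1 - σ) • diagonal d + σ • B) *ᵥ y = r₁ • y) :
    r ≤ r₁ := by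
  have hq : ∀ i, 0 < (B *ᵥ y) i / y i := fun i =>
    div_pos (mulVec_pos_of_eigenvector hB hu hr hBu hy i) (hy i)
  have hr₁ : ∀ i, r₁ = (1 - σ) * d i + σ * ((B *ᵥ y) i / y i) := fun i => by
    have := congrFun hy₁ i
    simp only [add_mulVec, smul_mulVec, Pi.add_apply, Pi.smul_apply, smul_eq_mul,
      mulVec_diagonal] at this
    field_simp [(hy i).ne']
    linarith
  have hr₁pos : 0 < r₁ := by
    simpa [← hr₁] using
      convex_Ioi (0 : ℝ) (hd 0) (hq 0) (sub_nonneg.mpr hσ₁) hσ₀ (sub_add_cancel 1 σ)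
  have hconc : ∀ i, (1 - σ) * log (d i) + σ * log ((B *ᵥ y) i / y i) ≤ log r₁ := fun i => by
    simpa [← hr₁ i] using
      strictConcaveOn_log_Ioi.concaveOn.2 (hd i) (hq i) (sub_nonneg.mpr hσ₁) hσ₀
        (sub_add_cancel 1 σ)
  have hπ : ∀ i, 0 ≤ w i * u i := fun i => (mul_pos (hw i) (hu i)).le
  have hdx := sum_mul_log_le_sum_mul_log_mulVec_div hB hu (fun i => (hw i).le) hr hBu hBw hx
  have hdy := sum_mul_log_le_sum_mul_log_mulVec_div hB hu (fun i => (hw i).le) hr hBu hBw hy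
  have hratio : ∀ i, (B *ᵥ x) i / x i = d i := fun i => by
    rw [hBx, mulVec_diagonal, mul_div_cancel_right₀ _ (hx i).ne']
  simp only [hratio] at hdx
  have hW : 0 < ∑ i, w i * u i := sum_pos (fun i _ => mul_pos (hw i) (hu i)) univ_nonempty
  have : (∑ i, w i * u i) * log r ≤ (∑ i, w i * u i) * log r₁ :=
    calc (∑ i, w i * u i) * log r
        = (1 - σ) * ((∑ i, w i * u i) * log r) + σ * ((∑ i, w i * u i) * log r) := by ring
      _ ≤ (1 - σ) * ∑ i, w i * u i * log (d i)
          + σ * ∑ i, w i * u i * log ((B *ᵥ y) i / y i) := by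
          gcongr
      _ = ∑ i, w i * u i * ((1 - σ) * log (d i) + σ * log ((B *ᵥ y) i / y i)) := by
          simp only [mul_sum, ← sum_add_distrib]
          exact sum_congr rfl fun i _ => by ring
      _ ≤ ∑ i, w i * u i * log r₁ := by gcongr with i; exacts [hπ i, hconc i]
      _ = (∑ i, w i * u i) * log r₁ := by rw [sum_mul]
  exact (log_le_log_iff hr hr₁pos).mp (le_of_mul_le_mul_left this hW)

end DonskerVaradhan

section Lazy

variable {M : Matrix (Fin N) (Fin N) ℝ} {d : Fin N → ℝ} {σ : ℝ}

def lazy (σ : ℝ) (M : Matrix (Fin N) (Fin N) ℝ) : Matrix (Fin N) (Fin N) ℝ :=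
  (1 - σ) • 1 + σ • M

lemma lazy_apply_nonneg (hM : ∀ i j, 0 ≤ M i j) (hσ₀ : 0 ≤ σ) (hσ₁ : σ ≤ 1) (i j : Fin N) :
    0 ≤ lazy σ M i j := by
  have hone : (0 : ℝ) ≤ (1 : Matrix (Fin N) (Fin N) ℝ) i j := by
    rw [one_apply]; split_ifs <;> norm_num
  simp only [lazy, Matrix.add_apply, Matrix.smul_apply, smul_eq_mul]
  exact add_nonneg (mul_nonneg (sub_nonneg.mpr hσ₁) hone) (mul_nonneg hσ₀ (hM i j))

lemma sum_lazy_apply (hM : ∀ j, ∑ i, M i j = 1) (j : Fin N) : ∑ i, lazy σ M i j = 1 := by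
  simp [lazy, sum_add_distrib, ← mul_sum, hM, one_apply]

lemma MatIrreducible.lazy (h : MatIrreducible M) (hσ : σ ≠ 0) : MatIrreducible (lazy σ M) :=
  h.of_ne_zero fun i j hij hM => by simpa [_root_.lazy, one_apply_ne hij, hσ] using hM

lemma lazy_lazy (σ τ : ℝ) (M : Matrix (Fin N) (Fin N) ℝ) :
    lazy σ (lazy τ M) = lazy (σ * τ) M := by
  simp only [lazy, smul_add, smul_smul]
  module

lemma lazy_mul_diagonal :
    lazy σ M * diagonal d = (1 - σ) • diagonal d + σ • (M * diagonal d) := by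
  simp [lazy, add_mul]

lemma mul_diagonal_apply_nonneg (hM : ∀ i j, 0 ≤ M i j) (hd : ∀ i, 0 ≤ d i) (i j : Fin N) :
    0 ≤ (M * diagonal d) i j := by
  rw [mul_diagonal]
  exact mul_nonneg (hM i j) (hd j)

lemma MatIrreducible.mul_diagonal (h : MatIrreducible M) (hd : ∀ i, d i ≠ 0) :
    MatIrreducible (M * diagonal d) :=
  h.of_ne_zero fun i j _ hM => by simpa [Matrix.mul_diagonal, hd j] using hM

lemma sum_mul_diagonal_apply (hM : ∀ j, ∑ i, M i j = 1) (j : Fin N) :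
    ∑ i, (M * diagonal d) i j = d j := by
  simp [Matrix.mul_diagonal, ← sum_mul, hM]

end Lazy

section SpectralRadius

variable [NeZero N] {M : Matrix (Fin N) (Fin N) ℝ} {d : Fin N → ℝ}

lemma specRad_diagonal (hd : ∀ i, 0 ≤ d i) :
    specRad (diagonal d) = univ.sup' univ_nonempty d := by
  obtain ⟨k, -, hk⟩ := exists_max_image univ d univ_nonempty
  rw [le_antisymm (sup'_le _ _ fun i _ => hk i (mem_univ i)) (le_sup' d (mem_univ k))]
  refine specRad_eq_of_isEigenvalue (hd k) (isEigenvalue_ofReal (u := Pi.single k 1) (by simp) ?_)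
    fun μ => norm_le_of_mulVec_le (x := fun _ => 1) ?_ (fun _ => one_pos) ?_
  · ext i
    by_cases h : i = k <;> simp [mulVec_diagonal, h]
  · intro i j
    by_cases h : i = j <;> simp [h, hd]
  · intro i
    simpa [mulVec_diagonal] using hk i (mem_univ i)

lemma specRad_mul_diagonal_le_specRad_diagonal (hM : ∀ i j, 0 ≤ M i j)
    (hMcol : ∀ j, ∑ i, M i j = 1) (hd : ∀ i, 0 ≤ d i) :
    specRad (M * diagonal d) ≤ specRad (diagonal d) := by
  rw [specRad_diagonal hd, ← specRad_transpose]
  refine specRad_le ((hd 0).trans (le_sup' d (mem_univ 0))) fun μ =>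
    norm_le_of_mulVec_le (A := (M * diagonal d)ᵀ) (x := fun _ => 1)
      (fun i j => mul_diagonal_apply_nonneg hM hd j i)
      (fun _ => one_pos) fun j => ?_
  have : ((M * diagonal d)ᵀ *ᵥ fun _ => 1) j = ∑ i, (M * diagonal d) i j := by
    simp [mulVec, dotProduct]
  rw [this, sum_mul_diagonal_apply hMcol, mul_one]
  exact le_sup' d (mem_univ j)

theorem exists_pos_eigenvector_pair {B : Matrix (Fin N) (Fin N) ℝ} (hB : ∀ i j, 0 ≤ B i j)
    (hirr : MatIrreducible B) : ∃ r : ℝ, ∃ u w : Fin N → ℝ,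
      (∀ i, 0 < u i) ∧ (∀ i, 0 < w i) ∧ B *ᵥ u = r • u ∧ w ᵥ* B = r • w := by
  obtain ⟨r, u, hu, hBu⟩ := exists_pos_eigenvector hB hirr
  obtain ⟨r', w, hw, hBw⟩ := exists_pos_eigenvector (A := Bᵀ) (fun i j => hB j i) hirr.transpose
  have hr' : r' = r := by
    rw [← specRad_eq_of_pos_eigenvector (A := Bᵀ) (fun i j => hB j i) hw hBw, specRad_transpose,
      specRad_eq_of_pos_eigenvector hB hu hBu]
  exact ⟨r, u, w, hu, hw, hBu, by rwa [hr', mulVec_transpose] at hBw⟩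

lemma exists_pos_fixedPoint (hM : ∀ i j, 0 ≤ M i j) (hMcol : ∀ j, ∑ i, M i j = 1)
    (hMirr : MatIrreducible M) : ∃ v : Fin N → ℝ, (∀ i, 0 < v i) ∧ M *ᵥ v = v := by
  obtain ⟨ρ, v, hv, hMv⟩ := exists_pos_eigenvector hM hMirr
  have hρ := mul_sum_eq_sum_colsum_mul hMv
  simp only [hMcol, one_mul] at hρ
  rw [(mul_eq_right₀ (sum_pos (fun i _ => hv i) univ_nonempty).ne').mp hρ, one_smul] at hMv
  exact ⟨v, hv, hMv⟩

theorem specRad_mul_diagonal_le_specRad_lazy_mul_diagonal (hM : ∀ i j, 0 ≤ M i j)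
    (hMcol : ∀ j, ∑ i, M i j = 1) (hMirr : MatIrreducible M) (hd : ∀ i, 0 < d i) {σ : ℝ}
    (hσ₀ : 0 ≤ σ) (hσ₁ : σ ≤ 1) :
    specRad (M * diagonal d) ≤ specRad (lazy σ M * diagonal d) := by
  rcases hσ₀.eq_or_lt with rfl | hσ
  · simpa [lazy] using specRad_mul_diagonal_le_specRad_diagonal hM hMcol fun i => (hd i).le
  have hB := mul_diagonal_apply_nonneg hM fun i => (hd i).le
  obtain ⟨r, u, w, hu, hw, hBu, hBw⟩ :=
    exists_pos_eigenvector_pair hB (hMirr.mul_diagonal fun i => (hd i).ne')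
  have hr : 0 < r := by
    refine pos_of_mul_pos_left ?_ (sum_pos (fun i _ => hu i) univ_nonempty).le
    rw [mul_sum_eq_sum_colsum_mul hBu]
    simp only [sum_mul_diagonal_apply hMcol]
    exact sum_pos (fun i _ => mul_pos (hd i) (hu i)) univ_nonempty
  obtain ⟨v, hv, hMv⟩ := exists_pos_fixedPoint hM hMcol hMirr
  have hDx : diagonal d *ᵥ (fun i => v i / d i) = v :=
    funext fun i => by rw [mulVec_diagonal, mul_div_cancel₀ _ (hd i).ne']
  have hB₁ := mul_diagonal_apply_nonneg (lazy_apply_nonneg hM hσ₀ hσ₁) fun i => (hd i).le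
  obtain ⟨r₁, y, hy, hy₁⟩ :=
    exists_pos_eigenvector hB₁ ((hMirr.lazy hσ.ne').mul_diagonal fun i => (hd i).ne')
  rw [specRad_eq_of_pos_eigenvector hB hu hBu, specRad_eq_of_pos_eigenvector hB₁ hy hy₁]
  rw [lazy_mul_diagonal] at hy₁
  refine eigenvalue_le_eigenvalue_convexComb_diagonal hB hu hw hr hBu hBw hd
    (fun i => div_pos (hv i) (hd i)) ?_ hσ₀ hσ₁ hy hy₁
  rw [← mulVec_mulVec, hDx, hMv]

end SpectralRadius

/-- Karlin's theorem: for an irreducible column-stochastic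
nonnegative matrix `S` and a positive diagonal matrix `D`, the map
`τ ↦ λ_PF(((1−τ)I + τS)D)` is nonincreasing on `[0,1]`. -/
theorem karlin_monotonicity (N : ℕ) (S : Matrix (Fin N) (Fin N) ℝ)
    (hS : ∀ i j, 0 ≤ S i j) (hcol : ∀ j, ∑ i, S i j = 1)
    (hirr : MatIrreducible S)
    (d : Fin N → ℝ) (hd : ∀ i, 0 < d i) :
    ∀ τ₁ ∈ Set.Icc (0:ℝ) 1, ∀ τ₂ ∈ Set.Icc (0:ℝ) 1, τ₁ ≤ τ₂ →
      specRad (((1-τ₂) • (1 : Matrix (Fin N) (Fin N) ℝ) + τ₂ • S) * Matrix.diagonal d)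
        ≤ specRad (((1-τ₁) • (1 : Matrix (Fin N) (Fin N) ℝ) + τ₁ • S) * Matrix.diagonal d) := by
  rintro τ₁ ⟨hτ₁₀, -⟩ τ₂ ⟨hτ₂₀, hτ₂₁⟩ hτ
  change specRad (lazy τ₂ S * diagonal d) ≤ specRad (lazy τ₁ S * diagonal d)
  rcases N.eq_zero_or_pos with rfl | hN
  · exact (congrArg specRad (Subsingleton.elim _ _)).le
  have : NeZero N := ⟨hN.ne'⟩
  rcases hτ₂₀.eq_or_lt with rfl | hτ₂
  · rw [le_antisymm hτ hτ₁₀]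
  rw [← div_mul_cancel₀ τ₁ hτ₂.ne', ← lazy_lazy]
  exact specRad_mul_diagonal_le_specRad_lazy_mul_diagonal (lazy_apply_nonneg hS hτ₂₀ hτ₂₁)
    (sum_lazy_apply hcol) (hirr.lazy hτ₂.ne') hd (div_nonneg hτ₁₀ hτ₂₀) ((div_le_one hτ₂).mpr hτ)
end
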